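/- Let g : ℝ^d → ℝ^d be L_max-Lipschitz, Q ≥ 1 an integer, η > 0 with η ≤ 1/(2Q·L_max), and define iterates y^{t+1} = y^t − η g(y^t) for t₀ ≤ t < t₀ + Q − 1 starting from y^{t₀}. Then ∑_{t=t₀}^{t₀+Q−1} ‖g(y^t) − g(y^{t₀})‖² ≤ 4Q²(1+Q)·L_max²·η²·‖g(y^{t₀})‖². -/
import Mathlib


theorem stmt_11 (d : ℕ) (g : EuclideanSpace ℝ (Fin d) → EuclideanSpace ℝ (Fin d))
    (Lmax : ℝ) (hL : 0 < Lmax) (hlip : ∀ x y, ‖g x - g y‖ ≤ Lmax * ‖x - y‖)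
    (Q : ℕ) (hQ : 1 ≤ Q) (η : ℝ) (hη : 0 < η) (hη' : η ≤ 1 / (2 * Q * Lmax))
    (t₀ : ℕ) (y : ℕ → EuclideanSpace ℝ (Fin d))
    (hupd : ∀ t, t₀ ≤ t → t < t₀ + Q - 1 → y (t + 1) = y t - η • g (y t)) :
    ∑ i ∈ Finset.range Q, ‖g (y (t₀ + i)) - g (y t₀)‖ ^ 2 ≤
      4 * (Q : ℝ) ^ 2 * (1 + Q) * Lmax ^ 2 * η ^ 2 * ‖g (y t₀)‖ ^ 2 := by
  set G := ‖g (y t₀)‖ with hG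
  have hG0 : 0 ≤ G := norm_nonneg _
  have hQpos : (0:ℝ) < Q := by exact_mod_cast Nat.lt_of_lt_of_le Nat.zero_lt_one hQ
  have hsmall : 2 * Lmax * η * Q ≤ 1 := by
    have h2 : (0:ℝ) < 2 * Q * Lmax := by positivity
    have := (le_div_iff₀ h2).mp hη'
    nlinarith
  -- representation of iterates
  have hrep : ∀ i, i ≤ Q - 1 →
      y (t₀ + i) = y t₀ - η • ∑ j ∈ Finset.range i, g (y (t₀ + j)) := by
    intro i
    induction i with
    | zero => intro _; simp
    | succ n ih =>
      intro hn
      have hn' : n ≤ Q - 1 := Nat.le_of_succ_le hn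
      have hlt : t₀ + n < t₀ + Q - 1 := by omega
      have := hupd (t₀ + n) (Nat.le_add_right _ _) hlt
      rw [show t₀ + (n + 1) = t₀ + n + 1 from rfl, this,
        Finset.sum_range_succ, smul_add, ← sub_sub, ih hn']
  -- main drift bound
  have key : ∀ i, i ≤ Q - 1 →
      ‖g (y (t₀ + i)) - g (y t₀)‖ ≤ 2 * Lmax * η * i * G := by
    intro i
    induction i using Nat.strong_induction_on with
    | _ i ih =>
      intro hi
      have h1 : ‖g (y (t₀ + i)) - g (y t₀)‖ ≤ Lmax * ‖y (t₀ + i) - y t₀‖ := hlip _ _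
      have h2 : ‖y (t₀ + i) - y t₀‖ = η * ‖∑ j ∈ Finset.range i, g (y (t₀ + j))‖ := by
        rw [hrep i hi]
        rw [sub_sub_cancel_left, norm_neg, norm_smul, Real.norm_eq_abs,
          abs_of_pos hη]
      have h3 : ‖∑ j ∈ Finset.range i, g (y (t₀ + j))‖ ≤ 2 * i * G := by
        calc ‖∑ j ∈ Finset.range i, g (y (t₀ + j))‖
            ≤ ∑ j ∈ Finset.range i, ‖g (y (t₀ + j))‖ := norm_sum_le _ _
          _ ≤ ∑ _j ∈ Finset.range i, 2 * G := by
              apply Finset.sum_le_sum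
              intro j hj
              have hj' : j < i := Finset.mem_range.mp hj
              have hjQ : j ≤ Q - 1 := le_trans (Nat.le_of_lt hj') hi
              have hb := ih j hj' hjQ
              have hjQ' : (j:ℝ) ≤ Q := by
                have : j ≤ Q := by omega
                exact_mod_cast this
              have : ‖g (y (t₀ + j))‖ ≤ G + 2 * Lmax * η * j * G := by
                have := norm_sub_norm_le (g (y (t₀ + j))) (g (y t₀))
                linarith
              have h4 : 2 * Lmax * η * j * G ≤ G := by
                have hpos : (0:ℝ) ≤ 2 * Lmax * η := by positivity
                have h5 := mul_le_mul_of_nonneg_right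
                  (mul_le_mul_of_nonneg_left hjQ' hpos) hG0
                nlinarith
              linarith
          _ = 2 * i * G := by rw [Finset.sum_const, Finset.card_range]; ring
      calc ‖g (y (t₀ + i)) - g (y t₀)‖ ≤ Lmax * (η * (2 * i * G)) := by
            rw [h2] at h1
            refine le_trans h1 ?_
            have : (0:ℝ) ≤ Lmax * η := by positivity
            nlinarith
        _ = 2 * Lmax * η * i * G := by ring
  -- conclude
  have hterm : ∀ i ∈ Finset.range Q,
      ‖g (y (t₀ + i)) - g (y t₀)‖ ^ 2 ≤ 4 * Lmax ^ 2 * η ^ 2 * Q ^ 2 * G ^ 2 := by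
    intro i hi
    have hi' : i < Q := Finset.mem_range.mp hi
    have hiQ : i ≤ Q - 1 := Nat.le_pred_of_lt hi'
    have hb := key i hiQ
    have hiQ' : (i:ℝ) ≤ Q := by exact_mod_cast Nat.le_of_lt hi'
    have hb2 : ‖g (y (t₀ + i)) - g (y t₀)‖ ≤ 2 * Lmax * η * Q * G := by
      have hpos : (0:ℝ) ≤ 2 * Lmax * η := by positivity
      have := mul_le_mul_of_nonneg_right
        (mul_le_mul_of_nonneg_left hiQ' hpos) hG0
      linarith
    have hnn : (0:ℝ) ≤ ‖g (y (t₀ + i)) - g (y t₀)‖ := norm_nonneg _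
    have hp : (0:ℝ) ≤ 2 * Lmax * η * Q * G := by positivity
    nlinarith [mul_le_mul hb2 hb2 hnn hp]
  calc ∑ i ∈ Finset.range Q, ‖g (y (t₀ + i)) - g (y t₀)‖ ^ 2
      ≤ ∑ _i ∈ Finset.range Q, 4 * Lmax ^ 2 * η ^ 2 * Q ^ 2 * G ^ 2 :=
        Finset.sum_le_sum hterm
    _ = 4 * Lmax ^ 2 * η ^ 2 * Q ^ 3 * G ^ 2 := by
        rw [Finset.sum_const, Finset.card_range]; ring
    _ ≤ 4 * (Q : ℝ) ^ 2 * (1 + Q) * Lmax ^ 2 * η ^ 2 * G ^ 2 := by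
        have hfac : (Q:ℝ) ^ 3 ≤ (Q:ℝ) ^ 2 * (1 + Q) := by nlinarith
        have hpos : (0:ℝ) ≤ 4 * Lmax ^ 2 * η ^ 2 * G ^ 2 := by positivity
        nlinarith [mul_le_mul_of_nonneg_left hfac hpos]
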